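/- Every occurrence of a periodic substring P of a string S is contained in a unique run of S whose period equals per(P). -/

import Mathlib

open Classical

/-- `p` is a period of the string (list) `P`. -/
def IsPeriodOf {α : Type*} (P : List α) (p : ℕ) : Prop :=
  0 < p ∧ ∀ i, i + p < P.length → P[i]? = P[i + p]?

/-- The smallest period of `P`. -/
noncomputable def minPeriod {α : Type*} (P : List α) : ℕ := sInf {p | IsPeriodOf P p}

/-- `P` is periodic if its smallest period is at most `|P|/2`. -/
def ListPeriodic {α : Type*} (P : List α) : Prop := 2 * minPeriod P ≤ P.length

/-- `P` occurs in `S` starting at position `i`. -/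
def OccursAt {α : Type*} (P S : List α) (i : ℕ) : Prop :=
  i + P.length ≤ S.length ∧ (S.drop i).take P.length = P

/-- The set of starting positions of occurrences of `P` in `S`. -/
noncomputable def occ {α : Type*} (P S : List α) : Finset ℕ :=
  (Finset.range (S.length + 1)).filter (fun i => OccursAt P S i)

/-- Hamming distance between two (equal-length) strings. -/
noncomputable def hamming {α : Type*} (S T : List α) : ℕ :=
  ((List.range S.length).filter (fun i => S[i]? ≠ T[i]?)).length

/-- `P` is `(τ,k)`-resilient in `S`. -/
def Resilient {α : Type*} (P S : List α) (τ k : ℕ) : Prop :=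
  ∀ S' : List α, S'.length = S.length → hamming S S' ≤ k → τ ≤ (occ P S').card

/-- The fragment `S[x..y]` (inclusive). -/
def frag {α : Type*} (S : List α) (x y : ℕ) : List α := (S.drop x).take (y - x + 1)

/-- The fragment `S[x..y]` is a run of `S`. -/
def IsRun {α : Type*} (S : List α) (x y : ℕ) : Prop :=
  x ≤ y ∧ y < S.length ∧ 2 * minPeriod (frag S x y) ≤ y - x + 1 ∧
  (0 < x → ¬ IsPeriodOf (frag S (x - 1) y) (minPeriod (frag S x y))) ∧
  (y + 1 < S.length → ¬ IsPeriodOf (frag S x (y + 1)) (minPeriod (frag S x y)))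

/-! Two fragments of `S` with period `p` that overlap in at least `p` positions have a
`p`-periodic union. A longest `p`-periodic fragment around the occurrence of `P`, `p = per(P)`, is
a run; its minimal period is `p`, since each of its periods is a period of `P`. Two such
runs overlap in `|P| ≥ 2p` positions, so both equal their union. -/

section

variable {α : Type*}

lemma isPeriodOf_length_succ (P : List α) : IsPeriodOf P (P.length + 1) :=
  ⟨P.length.succ_pos, fun _ h => by omega⟩

lemma minPeriod_isPeriodOf (P : List α) : IsPeriodOf P (minPeriod P) :=
  Nat.sInf_mem (s := {p | IsPeriodOf P p}) ⟨_, isPeriodOf_length_succ P⟩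

lemma minPeriod_pos (P : List α) : 0 < minPeriod P :=
  (minPeriod_isPeriodOf P).1

lemma minPeriod_le {P : List α} {p : ℕ} (h : IsPeriodOf P p) : minPeriod P ≤ p :=
  Nat.sInf_le h

lemma length_frag (S : List α) {x y : ℕ} (hxy : x ≤ y) (hy : y < S.length) :
    (frag S x y).length = y - x + 1 := by
  simp only [frag, List.length_take, List.length_drop]
  omega

lemma getElem?_frag (S : List α) {x y j : ℕ} (hj : x + j ≤ y) :
    (frag S x y)[j]? = S[x + j]? := by
  rw [frag, List.getElem?_take_of_lt (by omega), List.getElem?_drop]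

lemma frag_eq_of_occursAt {P S : List α} {i : ℕ} (hi : OccursAt P S i) (hP : P ≠ []) :
    frag S i (i + P.length - 1) = P := by
  have := List.length_pos_of_ne_nil hP
  rw [frag, show i + P.length - 1 - i + 1 = P.length by omega]
  exact hi.2

/-- `p` is a period of the fragment `S[x..y]`, stated in the positions of `S`. -/
def PeriodicOn (S : List α) (p x y : ℕ) : Prop :=
  ∀ t, x ≤ t → t + p ≤ y → S[t]? = S[t + p]?

lemma isPeriodOf_frag_iff (S : List α) {p x y : ℕ} (hxy : x ≤ y) (hy : y < S.length)
    (hp : 0 < p) : IsPeriodOf (frag S x y) p ↔ PeriodicOn S p x y := by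
  constructor
  · rintro ⟨-, h⟩ t hxt hty
    have := h (t - x) (by rw [length_frag S hxy hy]; omega)
    rwa [getElem?_frag S (by omega), getElem?_frag S (by omega),
      show x + (t - x) = t by omega, show x + (t - x + p) = t + p by omega] at this
  · refine fun h => ⟨hp, fun j hj => ?_⟩
    rw [length_frag S hxy hy] at hj
    rw [getElem?_frag S (by omega), getElem?_frag S (by omega), ← add_assoc]
    exact h (x + j) (by omega) (by omega)

lemma PeriodicOn.mono {S : List α} {p x y x' y' : ℕ} (h : PeriodicOn S p x y) (hx : x ≤ x')
    (hy : y' ≤ y) : PeriodicOn S p x' y' :=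
  fun t hxt hty => h t (hx.trans hxt) (hty.trans hy)

/-- A window of length `p + 1` starting at `t` lies in one of the two fragments, because they
overlap in at least `p` positions. -/
lemma PeriodicOn.union {S : List α} {p x y x' y' : ℕ} (h : PeriodicOn S p x y)
    (h' : PeriodicOn S p x' y') (hov : max x x' + p ≤ min y y' + 1) :
    PeriodicOn S p (min x x') (max y y') := by
  intro t hxt hty
  by_cases hx : x ≤ t ∧ t + p ≤ y
  · exact h t hx.1 hx.2
  · exact h' t (by omega) (by omega)

structure IsMaximalPeriodicOn (S : List α) (p x y : ℕ) : Prop where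
  le : x ≤ y
  lt_length : y < S.length
  periodicOn : PeriodicOn S p x y
  not_periodicOn_pred : 0 < x → ¬ PeriodicOn S p (x - 1) y
  not_periodicOn_succ : y + 1 < S.length → ¬ PeriodicOn S p x (y + 1)

namespace IsMaximalPeriodicOn

variable {S : List α} {p x y : ℕ}

lemma eq_of_periodicOn (h : IsMaximalPeriodicOn S p x y) {x' y' : ℕ}
    (h' : PeriodicOn S p x' y') (hx : x' ≤ x) (hy : y ≤ y') (hy' : y' < S.length) :
    x' = x ∧ y' = y := by
  constructor
  · by_contra hne
    exact h.not_periodicOn_pred (by omega) (h'.mono (by omega) hy)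
  · by_contra hne
    exact h.not_periodicOn_succ (by omega) (h'.mono hx (by omega))

lemma eq_of_overlap (h : IsMaximalPeriodicOn S p x y) {x' y' : ℕ}
    (h' : IsMaximalPeriodicOn S p x' y') (hov : max x x' + p ≤ min y y' + 1) :
    x = x' ∧ y = y' := by
  have hU := h.periodicOn.union h'.periodicOn hov
  have hUS : max y y' < S.length := max_lt h.lt_length h'.lt_length
  obtain ⟨hx, hy⟩ := h.eq_of_periodicOn hU (min_le_left _ _) (le_max_left _ _) hUS
  obtain ⟨hx', hy'⟩ := h'.eq_of_periodicOn hU (min_le_right _ _) (le_max_right _ _) hUS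
  exact ⟨hx.symm.trans hx', hy.symm.trans hy'⟩

end IsMaximalPeriodicOn

/-- A longest `p`-periodic fragment containing `S[x₀..y₀]` is maximal. -/
lemma PeriodicOn.exists_isMaximalPeriodicOn {S : List α} {p x₀ y₀ : ℕ}
    (h : PeriodicOn S p x₀ y₀) (hxy : x₀ ≤ y₀) (hy : y₀ < S.length) :
    ∃ x y, x ≤ x₀ ∧ y₀ ≤ y ∧ IsMaximalPeriodicOn S p x y := by
  set C := (Finset.range S.length ×ˢ Finset.range S.length).filter
    fun r : ℕ × ℕ => r.1 ≤ x₀ ∧ y₀ ≤ r.2 ∧ PeriodicOn S p r.1 r.2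
  have mem_C : ∀ {x y}, (x, y) ∈ C ↔
      x < S.length ∧ y < S.length ∧ x ≤ x₀ ∧ y₀ ≤ y ∧ PeriodicOn S p x y := by
    simp [C, and_assoc]
  obtain ⟨⟨x, y⟩, hC, hlongest⟩ := C.exists_max_image (fun r => r.2 - r.1)
    ⟨(x₀, y₀), mem_C.2 ⟨by omega, hy, le_rfl, le_rfl, h⟩⟩
  obtain ⟨-, hyS, hx, hy, hxy⟩ := mem_C.1 hC
  refine ⟨x, y, hx, hy, ⟨by omega, hyS, hxy, fun hx0 hext => ?_, fun hyS' hext => ?_⟩⟩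
  · have := hlongest (x - 1, y) (mem_C.2 ⟨by omega, hyS, by omega, hy, hext⟩)
    dsimp only at this
    omega
  · have := hlongest (x, y + 1) (mem_C.2 ⟨by omega, hyS', hx, by omega, hext⟩)
    dsimp only at this
    omega

lemma minPeriod_frag_eq_of_le (S : List α) {x y x' y' : ℕ} (hx : x ≤ x') (hxy' : x' ≤ y')
    (hy : y' ≤ y) (hyS : y < S.length)
    (h : PeriodicOn S (minPeriod (frag S x' y')) x y) :
    minPeriod (frag S x y) = minPeriod (frag S x' y') := by
  have hxy : x ≤ y := by omega
  refine le_antisymm (minPeriod_le ((isPeriodOf_frag_iff S hxy hyS (minPeriod_pos _)).2 h)) ?_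
  apply minPeriod_le
  rw [isPeriodOf_frag_iff S hxy' (by omega) (minPeriod_pos _)]
  exact ((isPeriodOf_frag_iff S hxy hyS (minPeriod_pos _)).1 (minPeriod_isPeriodOf _)).mono hx hy

lemma isRun_and_minPeriod_eq_iff (S : List α) {x y x' y' : ℕ} (hx : x ≤ x') (hxy' : x' ≤ y')
    (hy : y' ≤ y) (hper : 2 * minPeriod (frag S x' y') ≤ y' - x' + 1) :
    IsRun S x y ∧ minPeriod (frag S x y) = minPeriod (frag S x' y') ↔
      IsMaximalPeriodicOn S (minPeriod (frag S x' y')) x y := by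
  have hp := minPeriod_pos (frag S x' y')
  constructor
  · rintro ⟨⟨hxy, hyS, -, hpred, hsucc⟩, hmin⟩
    rw [hmin] at hpred hsucc
    refine ⟨hxy, hyS, ?_, fun hx0 hext => hpred hx0 ?_, fun hyS' hext => hsucc hyS' ?_⟩
    · rw [← hmin, ← isPeriodOf_frag_iff S hxy hyS (minPeriod_pos _)]
      exact minPeriod_isPeriodOf _
    · exact (isPeriodOf_frag_iff S (by omega) hyS hp).2 hext
    · exact (isPeriodOf_frag_iff S (by omega) hyS' hp).2 hext
  · intro h
    have hmin := minPeriod_frag_eq_of_le S hx hxy' hy h.lt_length h.periodicOn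
    refine ⟨⟨h.le, h.lt_length, by omega, fun hx0 hext => ?_, fun hyS' hext => ?_⟩, hmin⟩
    · rw [hmin, isPeriodOf_frag_iff S (by omega) h.lt_length hp] at hext
      exact h.not_periodicOn_pred hx0 hext
    · rw [hmin, isPeriodOf_frag_iff S (by omega) hyS' hp] at hext
      exact h.not_periodicOn_succ hyS' hext

end

theorem stmt15 {α : Type*} (S P : List α) (hper : ListPeriodic P)
    (i : ℕ) (hi : OccursAt P S i) :
    ∃! r : ℕ × ℕ, IsRun S r.1 r.2 ∧ minPeriod (frag S r.1 r.2) = minPeriod P ∧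
      r.1 ≤ i ∧ i + P.length ≤ r.2 + 1 := by
  have hp := minPeriod_pos P
  have hlen : 2 * minPeriod P ≤ P.length := hper
  set j := i + P.length - 1 with hj
  have hfrag : frag S i j = P := frag_eq_of_occursAt hi (List.ne_nil_of_length_pos (by omega))
  have hij : i ≤ j := by omega
  have hjS : j < S.length := by have := hi.1; omega
  have hlenj : P.length = j - i + 1 := by omega
  have hrun : ∀ x y, x ≤ i → j ≤ y → (IsRun S x y ∧ minPeriod (frag S x y) = minPeriod P ↔
      IsMaximalPeriodicOn S (minPeriod P) x y) := fun x y hx hy => by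
    rw [← hfrag]
    exact isRun_and_minPeriod_eq_iff S hx hij hy (by rw [hfrag]; omega)
  have hPer : PeriodicOn S (minPeriod P) i j := by
    rw [← isPeriodOf_frag_iff S hij hjS hp, hfrag]
    exact minPeriod_isPeriodOf P
  obtain ⟨x, y, hx, hy, hmax⟩ := hPer.exists_isMaximalPeriodicOn hij hjS
  obtain ⟨hxy, hmin⟩ := (hrun x y hx hy).2 hmax
  refine ⟨(x, y), ⟨hxy, hmin, hx, by omega⟩, ?_⟩
  rintro ⟨x', y'⟩ ⟨hxy', hmin', hx', hy'⟩
  have hmax' := (hrun x' y' hx' (by omega)).1 ⟨hxy', hmin'⟩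
  obtain ⟨rfl, rfl⟩ := hmax'.eq_of_overlap hmax (by omega)
  rfl
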